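/- arXiv:1909.06962 — 3 statements merged into one kernel-verified Lean document; each statement's English description precedes it below -/
import Mathlib

section
/- Suppose real numbers ν_{ij} (for i,j in a finite set M) and μ_i^v (for i in M and integer battery levels v) satisfy: (a) ν_{ij} ≥ 0 for all i,j; (b) ν_{ij} + μ_i^v - μ_j^{v - v_{ij}} - β·τ_{ij} ≤ 0 for all i,j,v; and (c) μ_i^v - μ_i^{v+1} - P_i ≤ 0 for all i,v, where P_i = p_i + β ≥ 0, β ≥ 0, τ_{ij} ≥ 0, and v_{ij} ≥ 0 are nonnegative integers. Then for all i,j: ν_{ij} ≤ β·(τ_{ij} + τ_{ji} + v_{ij} + v_{ji}) + v_{ij}·p_j + v_{ji}·p_i. -/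
lemma charge_iter {M : Type*} (μ : M → ℤ → ℝ) (β : ℝ) (p : M → ℝ)
    (hcharge : ∀ i (v : ℤ), μ i v - μ i (v + 1) - (p i + β) ≤ 0)
    (i : M) (v : ℤ) (n : ℕ) : μ i (v - n) ≤ n * (p i + β) + μ i v := by
  induction n with
  | zero => simp
  | succ k ih =>
    have h := hcharge i (v - (k + 1 : ℕ))
    have : (v - (k+1:ℕ)) + 1 = v - (k:ℕ) := by push_cast; ring
    rw [this] at h
    push_cast
    push_cast at ih h
    linarith

/-- Dual-feasibility bound for the static AMoD problem: if the dual variables `ν i j` and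
`μ i v` satisfy nonnegativity, the trip constraints, and the charging constraints with
`P i = p i + β`, then `ν i j ≤ β * (τ i j + τ j i + v i j + v j i) + v i j * p j + v j i * p i`. -/
theorem dual_variable_bound {M : Type*} [Fintype M]
    (ν : M → M → ℝ) (μ : M → ℤ → ℝ) (β : ℝ) (p : M → ℝ)
    (τ : M → M → ℕ) (vE : M → M → ℕ)
    (hβ : 0 ≤ β) (hp : ∀ i, 0 ≤ p i)
    (hν : ∀ i j, 0 ≤ ν i j)
    (htrip : ∀ i j (v : ℤ), ν i j + μ i v - μ j (v - (vE i j : ℤ)) - β * (τ i j : ℝ) ≤ 0)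
    (hcharge : ∀ i (v : ℤ), μ i v - μ i (v + 1) - (p i + β) ≤ 0) :
    ∀ i j, ν i j ≤ β * ((τ i j : ℝ) + (τ j i : ℝ) + (vE i j : ℝ) + (vE j i : ℝ))
      + (vE i j : ℝ) * p j + (vE j i : ℝ) * p i := by
  intro i j
  have h1 := htrip i j 0
  have h2 : μ j ((0:ℤ) - vE i j) ≤ (vE i j : ℝ) * (p j + β) + μ j 0 :=
    charge_iter μ β p hcharge j 0 (vE i j)
  have h3 := htrip j i 0
  have h4 : μ i ((0:ℤ) - vE j i) ≤ (vE j i : ℝ) * (p i + β) + μ i 0 :=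
    charge_iter μ β p hcharge i 0 (vE j i)
  have h5 := hν j i
  nlinarith [h1, h2, h3, h4, h5]
end

section
/- Under the dual feasibility constraints ν_{ij} + μ_i^v - μ_j^{v-v_{ij}} - β·τ_{ij} ≤ 0, ν_{ij} ≥ 0, and μ_i^v - μ_i^{v+1} - P_i ≤ 0 (for all i, j, and all integers v), the optimal static ride prices ℓ*_{ij} = (ℓ_max + ν_{ij})/2 satisfy the upper bound ℓ*_{ij} ≤ (ℓ_max + β·(τ_{ij}+τ_{ji}+v_{ij}+v_{ji}) + v_{ij}·p_j + v_{ji}·p_i)/2. -/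
/-- Under dual feasibility, the optimal static prices `ℓ* i j = (ℓmax + ν i j)/2` satisfy
`ℓ* i j ≤ (ℓmax + β*(τ i j + τ j i + v i j + v j i) + v i j * p j + v j i * p i) / 2`. -/
theorem optimal_price_upper_bound {M : Type*} [Fintype M]
    (ν : M → M → ℝ) (μ : M → ℤ → ℝ) (β ℓmax : ℝ) (p : M → ℝ)
    (τ : M → M → ℕ) (vE : M → M → ℕ)
    (hβ : 0 ≤ β) (hp : ∀ i, 0 ≤ p i) (hℓ : 0 < ℓmax)
    (hν : ∀ i j, 0 ≤ ν i j)
    (htrip : ∀ i j (v : ℤ), ν i j + μ i v - μ j (v - (vE i j : ℤ)) - β * (τ i j : ℝ) ≤ 0)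
    (hcharge : ∀ i (v : ℤ), μ i v - μ i (v + 1) - (p i + β) ≤ 0) :
    ∀ i j, (ℓmax + ν i j) / 2 ≤
      (ℓmax + β * ((τ i j : ℝ) + (τ j i : ℝ) + (vE i j : ℝ) + (vE j i : ℝ))
        + (vE i j : ℝ) * p j + (vE j i : ℝ) * p i) / 2 := by
  have chg : ∀ (n : ℕ) (i : M) (w : ℤ), μ i w ≤ μ i (w + n) + n * (p i + β) := by
    intro n i w
    induction n with
    | zero => simp
    | succ k ih =>
        have h := hcharge i (w + k)
        push_cast
        push_cast at ih
        rw [show w + ((k:ℤ) + 1) = w + k + 1 from by ring]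
        linarith
  intro i j
  have h1 := htrip i j 0
  have h2 := htrip j i 0
  have h3 := chg (vE i j) j (0 - (vE i j : ℤ))
  have h4 := chg (vE j i) i (0 - (vE j i : ℤ))
  simp only [sub_add_cancel] at h3 h4
  have hνji := hν j i
  linarith
end

section
/- Let Q : [0,∞) → [0,∞) be a continuous function with Q(0) = 0 that is differentiable except on a measure-zero set, and suppose that at every point t where Q is differentiable and Q(t) > 0, we have Q'(t) ≤ 0. Then Q(t) = 0 for all t ≥ 0. -/
open MeasureTheory Filter Topology

/-- A locally Lipschitz real function is Lipschitz on every compact set. -/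
lemma fluid_aux_lipschitzOnWith_of_locallyLipschitz {f : ℝ → ℝ} (hf : LocallyLipschitz f)
    {s : Set ℝ} (hs : IsCompact s) : ∃ K : NNReal, LipschitzOnWith K f s := by
  rcases s.eq_empty_or_nonempty with rfl | hne
  · exact ⟨0, by simp⟩
  have H : ∀ x : ℝ, ∃ K : NNReal, ∃ r : ℝ, 0 < r ∧ LipschitzOnWith K f (Metric.ball x r) := by
    intro x
    obtain ⟨K, t, ht, hK⟩ := hf x
    obtain ⟨r, hr, hball⟩ := Metric.mem_nhds_iff.1 ht
    exact ⟨K, r, hr, hK.mono hball⟩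
  choose K r hr hK using H
  obtain ⟨T, hTs, hTcover⟩ := hs.elim_nhds_subcover (fun x => Metric.ball x (r x / 2))
    (fun x _ => Metric.ball_mem_nhds x (by have := hr x; positivity))
  have hTne : T.Nonempty := by
    obtain ⟨x0, hx0⟩ := hne
    obtain ⟨i, hi, _⟩ := Set.mem_iUnion₂.1 (hTcover hx0)
    exact ⟨i, hi⟩
  set δ : ℝ := T.inf' hTne (fun x => r x / 2) with hδdef
  have hδpos : 0 < δ := by
    rw [hδdef, Finset.lt_inf'_iff]
    intro b _
    have := hr b; positivity
  have hδle : ∀ i ∈ T, δ ≤ r i / 2 := fun i hi => Finset.inf'_le _ hi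
  obtain ⟨M, hM⟩ := hs.exists_bound_of_continuousOn hf.continuous.continuousOn
  set C : ℝ := max M 0 with hCdef
  have hC0 : 0 ≤ C := le_max_right _ _
  have hC : ∀ x ∈ s, |f x| ≤ C := fun x hx => le_trans (hM x hx) (le_max_left _ _)
  refine ⟨T.sup K + Real.toNNReal (2 * C / δ), lipschitzOnWith_iff_dist_le_mul.2 ?_⟩
  intro x hx y hy
  have hcoe : ((T.sup K + Real.toNNReal (2 * C / δ) : NNReal) : ℝ)
      = ((T.sup K : NNReal) : ℝ) + (Real.toNNReal (2 * C / δ) : ℝ) := by push_cast; ring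
  by_cases hd : dist x y < δ
  · obtain ⟨i, hi, hxi⟩ := Set.mem_iUnion₂.1 (hTcover hx)
    have hxib : x ∈ Metric.ball i (r i) := by
      rw [Metric.mem_ball] at hxi ⊢
      have := hr i; linarith
    have hyib : y ∈ Metric.ball i (r i) := by
      rw [Metric.mem_ball] at hxi ⊢
      have h1 : dist y i ≤ dist y x + dist x i := dist_triangle _ _ _
      have h2 := hδle i hi
      rw [dist_comm y x] at h1
      linarith
    have h3 : dist (f x) (f y) ≤ (K i : ℝ) * dist x y :=
      lipschitzOnWith_iff_dist_le_mul.1 (hK i) x hxib y hyib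
    have h4 : (K i : ℝ) ≤ ((T.sup K + Real.toNNReal (2 * C / δ) : NNReal) : ℝ) := by
      rw [hcoe]
      have h6 : (K i : ℝ) ≤ ((T.sup K : NNReal) : ℝ) := by exact_mod_cast Finset.le_sup hi
      have h5 : (0:ℝ) ≤ (Real.toNNReal (2 * C / δ) : ℝ) := (Real.toNNReal _).coe_nonneg
      linarith
    calc dist (f x) (f y) ≤ (K i : ℝ) * dist x y := h3
      _ ≤ _ := mul_le_mul_of_nonneg_right h4 dist_nonneg
  · push_neg at hd
    have h1 : dist (f x) (f y) ≤ 2 * C := by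
      have hx' := hC x hx; have hy' := hC y hy
      have := norm_sub_le (f x) (f y)
      rw [Real.norm_eq_abs, Real.norm_eq_abs, Real.norm_eq_abs] at this
      rw [Real.dist_eq]
      linarith
    have h2 : 2 * C / δ ≤ ((T.sup K + Real.toNNReal (2 * C / δ) : NNReal) : ℝ) := by
      rw [hcoe, Real.coe_toNNReal _ (by positivity)]
      have : (0:ℝ) ≤ ((T.sup K : NNReal) : ℝ) := (T.sup K).coe_nonneg
      linarith
    calc dist (f x) (f y) ≤ 2 * C := h1
      _ = (2 * C / δ) * δ := by field_simp
      _ ≤ (2 * C / δ) * dist x y := mul_le_mul_of_nonneg_left hd (by positivity)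
      _ ≤ _ := mul_le_mul_of_nonneg_right h2 dist_nonneg

/-- Fluid-model stability lemma: a nonnegative, continuous, locally Lipschitz function
`Q` on `[0,∞)` with `Q 0 = 0`, differentiable off a null set, whose derivative is
nonpositive wherever `Q` is differentiable and positive, is identically zero on `[0,∞)`. -/
theorem fluid_lemma_zero (Q : ℝ → ℝ)
    (hcont : ContinuousOn Q (Set.Ici 0))
    (hlip : LocallyLipschitz Q)
    (hnonneg : ∀ t ≥ (0 : ℝ), 0 ≤ Q t)
    (h0 : Q 0 = 0)
    (N : Set ℝ) (hN : volume N = 0)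
    (hdiff : ∀ t ∈ Set.Ici (0 : ℝ) \ N, DifferentiableAt ℝ Q t)
    (hderiv : ∀ t ∈ Set.Ici (0 : ℝ) \ N, DifferentiableAt ℝ Q t → 0 < Q t → deriv Q t ≤ 0) :
    ∀ t ≥ (0 : ℝ), Q t = 0 := by
  intro t₀ ht₀
  refine le_antisymm ?_ (hnonneg t₀ ht₀)
  have key : ∀ c : ℝ, 0 < c → Q t₀ ≤ c := by
    intro c hc
    -- a uniform Lipschitz constant on [0, t₀]
    obtain ⟨K, hK⟩ := fluid_aux_lipschitzOnWith_of_locallyLipschitz hlip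
      (isCompact_Icc : IsCompact (Set.Icc (0:ℝ) t₀))
    set Kr : ℝ := (K : ℝ) with hKrdef
    have hKr0 : 0 ≤ Kr := K.coe_nonneg
    -- an open set of small measure containing N
    obtain ⟨U, hNU, hUopen, hUlt⟩ := Set.exists_isOpen_lt_of_lt N
      (ENNReal.ofReal (c / (3 * (Kr + 1)))) (by
        rw [hN]
        exact ENNReal.ofReal_pos.2 (by positivity))
    have hUfin : volume U ≠ ⊤ := (hUlt.trans ENNReal.ofReal_lt_top).ne
    set m : ℝ → ℝ := fun t => (volume (U ∩ Set.Ioc 0 t)).toReal with hmdef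
    have hfin : ∀ t : ℝ, volume (U ∩ Set.Ioc 0 t) ≠ ⊤ :=
      fun t => ((measure_mono Set.inter_subset_left).trans_lt
        (lt_top_iff_ne_top.2 hUfin)).ne
    have hm0 : ∀ t, 0 ≤ m t := fun t => ENNReal.toReal_nonneg
    have hmmono : ∀ a b : ℝ, a ≤ b → m a ≤ m b := by
      intro a b hab
      exact ENNReal.toReal_mono (hfin b)
        (measure_mono (Set.inter_subset_inter_right U (Set.Ioc_subset_Ioc le_rfl hab)))
    have hmgrow : ∀ a b : ℝ, a ≤ b → m b ≤ m a + (b - a) := by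
      intro a b hab
      have hsub : U ∩ Set.Ioc 0 b ⊆ (U ∩ Set.Ioc 0 a) ∪ Set.Ioc a b := by
        intro w hw
        rcases le_or_gt w a with h | h
        · exact Or.inl ⟨hw.1, hw.2.1, h⟩
        · exact Or.inr ⟨h, hw.2.2⟩
      have h1 : volume (U ∩ Set.Ioc 0 b)
          ≤ volume (U ∩ Set.Ioc 0 a) + ENNReal.ofReal (b - a) := by
        calc volume (U ∩ Set.Ioc 0 b) ≤ volume ((U ∩ Set.Ioc 0 a) ∪ Set.Ioc a b) :=
              measure_mono hsub
          _ ≤ volume (U ∩ Set.Ioc 0 a) + volume (Set.Ioc a b) := measure_union_le _ _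
          _ = volume (U ∩ Set.Ioc 0 a) + ENNReal.ofReal (b - a) := by
              rw [Real.volume_Ioc]
      have h2 := ENNReal.toReal_mono
        (ENNReal.add_ne_top.2 ⟨hfin a, ENNReal.ofReal_ne_top⟩) h1
      rwa [ENNReal.toReal_add (hfin a) ENNReal.ofReal_ne_top,
        ENNReal.toReal_ofReal (sub_nonneg.2 hab)] at h2
    have hmgrow' : ∀ a b : ℝ, 0 ≤ a → a ≤ b → Set.Icc a b ⊆ U → m a + (b - a) ≤ m b := by
      intro a b ha hab hIcc
      have hsub : (U ∩ Set.Ioc 0 a) ∪ Set.Ioc a b ⊆ U ∩ Set.Ioc 0 b := by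
        intro w hw
        rcases hw with hw | hw
        · exact ⟨hw.1, hw.2.1, hw.2.2.trans hab⟩
        · exact ⟨hIcc ⟨hw.1.le, hw.2⟩, lt_of_le_of_lt ha hw.1, hw.2⟩
      have hdisj : Disjoint (U ∩ Set.Ioc 0 a) (Set.Ioc a b) :=
        Set.disjoint_left.2 fun w hw1 hw2 => absurd hw2.1 (not_lt.2 hw1.2.2)
      have h1 : volume (U ∩ Set.Ioc 0 a) + ENNReal.ofReal (b - a)
          ≤ volume (U ∩ Set.Ioc 0 b) := by
        rw [← Real.volume_Ioc, ← measure_union hdisj measurableSet_Ioc]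
        exact measure_mono hsub
      have h2 := ENNReal.toReal_mono (hfin b) h1
      rwa [ENNReal.toReal_add (hfin a) ENNReal.ofReal_ne_top,
        ENNReal.toReal_ofReal (sub_nonneg.2 hab)] at h2
    have hmcont : Continuous m := by
      have key : ∀ a b : ℝ, a ≤ b → dist (m a) (m b) ≤ dist a b := by
        intro a b hab
        have h1 := hmmono a b hab
        have h2 := hmgrow a b hab
        rw [Real.dist_eq, Real.dist_eq, abs_of_nonpos (by linarith), abs_of_nonpos (by linarith)]
        linarith
      refine (LipschitzWith.of_dist_le_mul (K := 1) fun a b => ?_).continuous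
      rw [NNReal.coe_one, one_mul]
      rcases le_total a b with h | h
      · exact key a b h
      · rw [dist_comm, dist_comm a b]; exact key b a h
    set ε' : ℝ := c / 3 with hε'def
    set θ : ℝ := c / (3 * (t₀ + 1)) with hθdef
    have hε'pos : 0 < ε' := by positivity
    have hθpos : 0 < θ := by positivity
    set g : ℝ → ℝ := fun t => Q t - (ε' + (Kr + 1) * m t + θ * t) with hgdef
    -- continuous induction to show `g ≤ 0` on `[0, t₀]`
    have hsclosed : IsClosed (g ⁻¹' Set.Iic 0 ∩ Set.Icc 0 t₀) := by
      have hQc : ContinuousOn Q (Set.Icc 0 t₀) := hcont.mono (Set.Icc_subset_Ici_self)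
      have hgc : ContinuousOn g (Set.Icc 0 t₀) := by
        apply hQc.sub
        exact (Continuous.continuousOn (by fun_prop))
      have := hgc.preimage_isClosed_of_isClosed isClosed_Icc (isClosed_Iic : IsClosed (Set.Iic (0:ℝ)))
      rwa [Set.inter_comm] at this
    have h0mem : (0:ℝ) ∈ g ⁻¹' Set.Iic 0 := by
      have hm00 : 0 ≤ m 0 := hm0 0
      simp only [Set.mem_preimage, Set.mem_Iic, hgdef, h0]
      nlinarith
    have hgt : ∀ x ∈ (g ⁻¹' Set.Iic 0) ∩ Set.Ico 0 t₀, ∀ y ∈ Set.Ioi x,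
        ((g ⁻¹' Set.Iic 0) ∩ Set.Ioc x y).Nonempty := by
      rintro x ⟨hxs, hx0, hxt₀⟩ y (hy : x < y)
      have hxs' : Q x ≤ ε' + (Kr + 1) * m x + θ * x := by
        have : g x ≤ 0 := hxs
        simpa [hgdef] using sub_nonpos.1 this
      set y' : ℝ := min y t₀ with hy'def
      have hxy' : x < y' := lt_min hy hxt₀
      have hy'le : y' ≤ y := min_le_left _ _
      have hy't₀ : y' ≤ t₀ := min_le_right _ _
      by_cases hxU : x ∈ U
      · -- inside U: use the Lipschitz bound; `m` grows at unit rate here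
        obtain ⟨δ, hδ, hball⟩ := Metric.isOpen_iff.1 hUopen x hxU
        set z : ℝ := min y' (x + δ / 2) with hzdef
        have hxz : x < z := lt_min hxy' (by linarith)
        have hzy' : z ≤ y' := min_le_left _ _
        have hzδ : z ≤ x + δ / 2 := min_le_right _ _
        have hzt₀ : z ≤ t₀ := hzy'.trans hy't₀
        have hIccU : Set.Icc x z ⊆ U := by
          intro w hw
          apply hball
          rw [Metric.mem_ball, Real.dist_eq, abs_lt]
          constructor <;> [linarith [hw.1]; linarith [hw.2]]
        have hLip : Q z - Q x ≤ Kr * (z - x) := by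
          have h := lipschitzOnWith_iff_dist_le_mul.1 hK z
            ⟨by linarith, hzt₀⟩ x ⟨hx0, hxt₀.le⟩
          rw [Real.dist_eq, Real.dist_eq, abs_of_nonneg (by linarith : (0:ℝ) ≤ z - x)] at h
          calc Q z - Q x ≤ |Q z - Q x| := le_abs_self _
            _ ≤ Kr * (z - x) := h
        have hm1 : m x + (z - x) ≤ m z := hmgrow' x z hx0 hxz.le hIccU
        refine ⟨z, ?_, hxz, hzy'.trans hy'le⟩
        show g z ≤ 0
        have e1 : (Kr + 1) * m x + (Kr + 1) * (z - x) ≤ (Kr + 1) * m z := by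
          nlinarith [hm1]
        have e2 : 0 ≤ θ * (z - x) := mul_nonneg hθpos.le (by linarith)
        have e3 : θ * z = θ * x + θ * (z - x) := by ring
        have e4 : Kr * (z - x) ≤ (Kr + 1) * (z - x) := by nlinarith
        simp only [hgdef]
        linarith
      · rcases lt_or_eq_of_le hxs' with hlt | heq
        · -- strict inequality: conclude by continuity
          have hcw : ContinuousWithinAt Q (Set.Ici 0) x := hcont x hx0
          have hmono : 𝓝[Set.Ioi x] x ≤ 𝓝[Set.Ici (0:ℝ)] x :=
            nhdsWithin_mono x (fun w hw => le_trans hx0 (le_of_lt hw))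
          have h1 : ∀ᶠ w in 𝓝[Set.Ioi x] x, Q w < ε' + (Kr + 1) * m x + θ * x :=
            hmono (hcw (Iio_mem_nhds hlt))
          have h2 : Set.Ioc x y' ∈ 𝓝[Set.Ioi x] x := Ioc_mem_nhdsGT_of_mem ⟨le_rfl, hxy'⟩
          obtain ⟨z, hz1, hz2⟩ := (h1.and h2).exists
          refine ⟨z, ?_, hz2.1, hz2.2.trans hy'le⟩
          show g z ≤ 0
          have e1 : (Kr + 1) * m x ≤ (Kr + 1) * m z :=
            mul_le_mul_of_nonneg_left (hmmono x z hz2.1.le) (by positivity)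
          have e2 : θ * x ≤ θ * z := mul_le_mul_of_nonneg_left hz2.1.le hθpos.le
          simp only [hgdef]
          linarith
        · -- equality: `Q x > 0`, so the derivative is nonpositive
          have hQxpos : 0 < Q x := by
            have := hm0 x
            have : 0 ≤ θ * x := mul_nonneg hθpos.le hx0
            rw [heq]; nlinarith [hm0 x]
          have hxN : x ∉ N := fun h => hxU (hNU h)
          have hxmem : x ∈ Set.Ici (0:ℝ) \ N := ⟨hx0, hxN⟩
          have hdQ := hdiff x hxmem
          have hdle : deriv Q x ≤ 0 := hderiv x hxmem hdQ hQxpos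
          have hslope : Filter.Tendsto (slope Q x) (𝓝[≠] x) (𝓝 (deriv Q x)) :=
            hasDerivAt_iff_tendsto_slope.1 hdQ.hasDerivAt
          have hmono : 𝓝[Set.Ioi x] x ≤ 𝓝[≠] x :=
            nhdsWithin_mono x (fun w hw => ne_of_gt hw)
          have h1 : ∀ᶠ w in 𝓝[Set.Ioi x] x, slope Q x w < θ :=
            hmono (hslope (Iio_mem_nhds (lt_of_le_of_lt hdle hθpos)))
          have h2 : Set.Ioc x y' ∈ 𝓝[Set.Ioi x] x := Ioc_mem_nhdsGT_of_mem ⟨le_rfl, hxy'⟩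
          obtain ⟨z, hz1, hz2⟩ := (h1.and h2).exists
          have hzx : 0 < z - x := sub_pos.2 hz2.1
          have hQz : Q z - Q x < θ * (z - x) := by
            have := hz1
            rw [slope_def_field, div_lt_iff₀ hzx] at this
            linarith [this]
          refine ⟨z, ?_, hz2.1, hz2.2.trans hy'le⟩
          show g z ≤ 0
          have e1 : (Kr + 1) * m x ≤ (Kr + 1) * m z :=
            mul_le_mul_of_nonneg_left (hmmono x z hz2.1.le) (by positivity)
          have e3 : θ * z = θ * x + θ * (z - x) := by ring
          simp only [hgdef]
          linarith [heq.symm ▸ hQz]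
    have hIcc : Set.Icc (0:ℝ) t₀ ⊆ g ⁻¹' Set.Iic 0 :=
      hsclosed.Icc_subset_of_forall_exists_gt h0mem hgt
    have ht0mem : t₀ ∈ Set.Icc (0:ℝ) t₀ := ⟨ht₀, le_rfl⟩
    have hgt0 : Q t₀ ≤ ε' + (Kr + 1) * m t₀ + θ * t₀ := by
      have : g t₀ ≤ 0 := hIcc ht0mem
      simpa [hgdef] using sub_nonpos.1 this
    have hmt₀ : m t₀ < c / (3 * (Kr + 1)) := by
      rw [hmdef]
      exact (ENNReal.lt_ofReal_iff_toReal_lt (hfin t₀)).1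
        (lt_of_le_of_lt (measure_mono Set.inter_subset_left) hUlt)
    have h1 : (Kr + 1) * m t₀ ≤ c / 3 := by
      have heq : (Kr + 1) * (c / (3 * (Kr + 1))) = c / 3 := by
        field_simp
      nlinarith [hmt₀, hKr0]
    have h2 : θ * t₀ ≤ c / 3 := by
      rw [hθdef, div_mul_eq_mul_div, div_le_div_iff₀ (by positivity) (by norm_num)]
      nlinarith
    linarith
  exact le_of_forall_pos_le_add (fun ε hε => by linarith [key ε hε])
end
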